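/- arXiv:2207.02330 — 2 statements merged into one kernel-verified Lean document; each statement's English description precedes it below -/
import Mathlib

section
/- The map θ_3 : (Z/3Z)^3 → Z/3Z given by θ_3(x,y,z) = (x - y)(y - z)·z·(x + z) (as the exponent of a generator u of the cyclic group of order 3) satisfies the quandle 3-cocycle conditions for the dihedral quandle R_3: (i) for all x_0, x_1, x_2, x_3 ∈ Z/3Z, -θ_3(x_0,x_2,x_3) + θ_3(x_0 ▷ x_1, x_2, x_3) + θ_3(x_0,x_1,x_3) - θ_3(x_0 ▷ x_2, x_1 ▷ x_2, x_3) - θ_3(x_0,x_1,x_2) + θ_3(x_0 ▷ x_3, x_1 ▷ x_3, x_2 ▷ x_3) = 0, and (ii) θ_3(y,x,x) = θ_3(x,x,y) = 0 for all x, y. -/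
/-- Mochizuki's cocycle θ₃ on the dihedral quandle R₃, written in exponent form. -/
def theta3 (x y z : ZMod 3) : ZMod 3 := (x - y) * (y - z) * z * (x + z)

theorem theta3_cocycle_identity (x0 x1 x2 x3 : ZMod 3) :
    -theta3 x0 x2 x3 + theta3 (2 * x1 - x0) x2 x3 + theta3 x0 x1 x3
      - theta3 (2 * x2 - x0) (2 * x2 - x1) x3 - theta3 x0 x1 x2
      + theta3 (2 * x3 - x0) (2 * x3 - x1) (2 * x3 - x2) = 0 := by
  revert x0 x1 x2 x3
  decide

theorem theta3_left_degenerate (x y : ZMod 3) : theta3 x x y = 0 := by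
  simp [theta3]

theorem theta3_right_degenerate (x y : ZMod 3) : theta3 y x x = 0 := by
  simp [theta3]

/-- θ₃ satisfies the quandle 3-cocycle conditions for R₃ (with x ▷ y = 2y - x). -/
theorem theta3_is_cocycle
    (op : ZMod 3 → ZMod 3 → ZMod 3) (hop : ∀ x y, op x y = 2 * y - x) :
    (∀ x0 x1 x2 x3 : ZMod 3,
      -theta3 x0 x2 x3 + theta3 (op x0 x1) x2 x3 + theta3 x0 x1 x3
        - theta3 (op x0 x2) (op x1 x2) x3 - theta3 x0 x1 x2
        + theta3 (op x0 x3) (op x1 x3) (op x2 x3) = 0) ∧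
    (∀ x y : ZMod 3, theta3 y x x = 0 ∧ theta3 x x y = 0) := by
  obtain rfl : op = fun x y => 2 * y - x := funext₂ hop
  exact ⟨theta3_cocycle_identity,
    fun x y => ⟨theta3_right_degenerate x y, theta3_left_degenerate x y⟩⟩
end

section
/- The function φ : P_3^3 → Z/2Z ⊕ Z defined by φ(0,1,0) = φ(0,2,0) = (1,0), φ(1,0,2) = φ(2,0,1) = (0,1), φ(1,0,1) = φ(2,0,2) = (0,-1), and φ(a,b,c) = (0,0) otherwise, is a quandle 3-cocycle of P_3. -/
/-- The quandle P₃ on {0,1,2}. -/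
def p3 (x y : Fin 3) : Fin 3 :=
  if y = 0 then (if x = 1 then 2 else if x = 2 then 1 else 0) else x

/-- Oshiro's 3-cocycle φ of P₃ with values in Z/2Z ⊕ Z. -/
def phi (a b c : Fin 3) : ZMod 2 × ℤ :=
  if (a, b, c) = (0, 1, 0) ∨ (a, b, c) = (0, 2, 0) then (1, 0)
  else if (a, b, c) = (1, 0, 2) ∨ (a, b, c) = (2, 0, 1) then (0, 1)
  else if (a, b, c) = (1, 0, 1) ∨ (a, b, c) = (2, 0, 2) then (0, -1)
  else (0, 0)

/-- φ is a quandle 3-cocycle of P₃. -/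
theorem phi_is_cocycle :
    (∀ x0 x1 x2 x3 : Fin 3,
      -phi x0 x2 x3 + phi (p3 x0 x1) x2 x3 + phi x0 x1 x3
        - phi (p3 x0 x2) (p3 x1 x2) x3 - phi x0 x1 x2
        + phi (p3 x0 x3) (p3 x1 x3) (p3 x2 x3) = 0) ∧
    (∀ x y : Fin 3, phi y x x = 0 ∧ phi x x y = 0) :=
  ⟨by decide, by decide⟩
end
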